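/- arXiv:1610.04826 — 6 statements merged into one kernel-verified Lean document; each statement's English description precedes it below -/
import Mathlib

section
/- For every positive integer n, the Möbius function satisfies μ(n) = Σ_{k=0}^{⌊log₂ n⌋} (−1)^k f_k(n), where f_k(n) = f_k(n,2). -/
open Finset

/-- `f k n l` is the number of ordered `k`-tuples `(i₁, …, i_k)` of integers
with each `i_j ≥ l` and `i₁ ⋯ i_k = n`.  (For `n ≥ 1` and `l ≥ 1` every such
factor lies in `[l, n]`, and for `k = 0` this gives `1` if `n = 1` and `0` otherwise.) -/
def f (k n l : ℕ) : ℕ :=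
  ((Fintype.piFinset fun _ : Fin k => Finset.Icc l n).filter
    fun v => ∏ i, v i = n).card

/-- `F k x l = ∑_{n ≤ x} f k n l`; it equals `0` for `x < 1` and `F 0 x l = 1` for `x ≥ 1`. -/
noncomputable def F (k : ℕ) (x : ℝ) (l : ℕ) : ℕ :=
  ∑ n ∈ Finset.Icc 1 ⌊x⌋₊, f k n l

/-!
Let `x = ζ - 1`, the indicator of `n ≥ 2`, as an arithmetic function. Peeling off the first
factor of a factorization shows that the Dirichlet power `x ^ k` counts ordered factorizations
into `k` factors `≥ 2`, i.e. `(x ^ k) n = f_k(n)`, which vanishes for `n < 2 ^ k`. Since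
`ζ = 1 + x`, the geometric series gives `μ = ζ⁻¹ = ∑_{k < N} (-x) ^ k + μ * (-x) ^ N`, and at `n`
the remainder vanishes as soon as `2 ^ N > n`.
-/

open scoped ArithmeticFunction.Moebius ArithmeticFunction.zeta

theorem f_zero_left (n l : ℕ) : f 0 n l = if n = 1 then 1 else 0 := by
  simp only [f, eq_comm]
  split <;> simp_all

theorem f_eq_zero_of_lt_pow {k n l : ℕ} (h : n < l ^ k) : f k n l = 0 := by
  rw [f, card_eq_zero, filter_eq_empty_iff]
  intro v hv hvn
  have : l ^ k ≤ ∏ i, v i :=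
    calc l ^ k = ∏ _i : Fin k, l := by simp
      _ ≤ ∏ i, v i := prod_le_prod' fun i _ => (mem_Icc.mp (Fintype.mem_piFinset.mp hv i)).1
  omega

theorem f_eq_card_filter_piFinset_Icc {k n l N : ℕ} (hl : 0 < l) (hnN : n ≤ N) :
    f k n l = #{v ∈ Fintype.piFinset fun _ : Fin k => Icc l N | ∏ i, v i = n} := by
  rw [f]
  congr 1
  ext v
  simp only [mem_filter, Fintype.mem_piFinset, mem_Icc]
  refine ⟨fun ⟨hv, hprod⟩ => ⟨fun i => ⟨(hv i).1, (hv i).2.trans hnN⟩, hprod⟩,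
    fun ⟨hv, hprod⟩ => ⟨fun i => ⟨(hv i).1, ?_⟩, hprod⟩⟩
  have hn : n ≠ 0 := hprod ▸ prod_ne_zero_iff.mpr fun j _ => (hl.trans_le (hv j).1).ne'
  exact Nat.le_of_dvd (Nat.pos_of_ne_zero hn) (hprod ▸ dvd_prod_of_mem v (mem_univ i))

theorem f_succ_eq_card_filter_product (k n l : ℕ) :
    f (k + 1) n l = #{p ∈ Icc l n ×ˢ Fintype.piFinset (fun _ : Fin k => Icc l n) |
      p.1 * ∏ i, p.2 i = n} := by
  refine card_nbij' (fun v => (v 0, Fin.tail v)) (fun p => Fin.cons p.1 p.2) ?_ ?_ ?_ ?_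
  · intro v hv
    simp_all [Fin.prod_univ_succ, Fin.forall_fin_succ, Fin.tail]
  · intro p hp
    simp_all [Fin.prod_univ_succ, Fin.forall_fin_succ]
  · exact fun v _ => Fin.cons_self_tail v
  · intro p _
    simp

theorem f_succ {k n l : ℕ} (hl : 0 < l) :
    f (k + 1) n l = ∑ a ∈ n.divisors with l ≤ a, f k (n / a) l := by
  have hfiber : ∀ a ∈ Icc l n,
      #{w ∈ Fintype.piFinset (fun _ : Fin k => Icc l n) | a * ∏ i, w i = n} =
        if a ∣ n then f k (n / a) l else 0 := by
    intro a ha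
    split_ifs with hdvd
    · have ha0 : 0 < a := hl.trans_le (mem_Icc.mp ha).1
      rw [f_eq_card_filter_piFinset_Icc hl (Nat.div_le_self n a)]
      refine congrArg card (filter_congr fun w _ => ?_)
      rw [eq_comm (b := n / a), Nat.div_eq_iff_eq_mul_right ha0 hdvd, eq_comm]
    · rw [card_eq_zero, filter_eq_empty_iff]
      exact fun w _ h => hdvd (h ▸ dvd_mul_right a _)
  have hdivisors : {a ∈ n.divisors | l ≤ a} = {a ∈ Icc l n | a ∣ n} := by
    ext a
    simp only [mem_filter, Nat.mem_divisors, mem_Icc]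
    constructor
    · rintro ⟨⟨hdvd, hn⟩, hla⟩
      exact ⟨⟨hla, Nat.le_of_dvd (Nat.pos_of_ne_zero hn) hdvd⟩, hdvd⟩
    · rintro ⟨⟨hla, han⟩, hdvd⟩
      exact ⟨⟨hdvd, by omega⟩, hla⟩
  rw [f_succ_eq_card_filter_product, card_filter, sum_product, hdivisors, sum_filter]
  refine sum_congr rfl fun a ha => ?_
  rw [← card_filter, hfiber a ha]

namespace ArithmeticFunction

theorem sum_apply {R ι : Type*} [AddCommMonoid R] (s : Finset ι)
    (g : ι → ArithmeticFunction R) (n : ℕ) : (∑ i ∈ s, g i) n = ∑ i ∈ s, g i n :=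
  map_sum (⟨⟨fun g : ArithmeticFunction R => g n, rfl⟩, fun _ _ => rfl⟩ :
    ArithmeticFunction R →+ R) g s

theorem sub_apply {R : Type*} [AddGroup R] (g h : ArithmeticFunction R) (n : ℕ) :
    (g - h) n = g n - h n := by
  rw [sub_eq_add_neg, add_apply, neg_apply, sub_eq_add_neg]

theorem neg_pow_apply {R : Type*} [CommRing R] (g : ArithmeticFunction R) (k n : ℕ) :
    ((-g) ^ k) n = (-1) ^ k * (g ^ k) n := by
  rcases k.even_or_odd with hk | hk
  · simp [hk.neg_pow]
  · simp [hk.neg_pow, neg_apply]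

theorem zeta_sub_one_apply (n : ℕ) :
    ((ζ : ArithmeticFunction ℤ) - 1) n = if 2 ≤ n then 1 else 0 := by
  rw [sub_apply, natCoe_apply, zeta_apply, one_apply]
  split_ifs <;> omega

theorem zeta_sub_one_pow_apply (k n : ℕ) :
    (((ζ : ArithmeticFunction ℤ) - 1) ^ k) n = f k n 2 := by
  induction k generalizing n with
  | zero => simp [one_apply, f_zero_left]
  | succ k ih =>
    rw [pow_succ', mul_apply, Nat.sum_divisorsAntidiagonal fun a b =>
      ((ζ : ArithmeticFunction ℤ) - 1) a * (((ζ : ArithmeticFunction ℤ) - 1) ^ k) b,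
      f_succ two_pos, Nat.cast_sum, sum_filter]
    refine sum_congr rfl fun a _ => ?_
    rw [zeta_sub_one_apply, ih]
    split_ifs <;> simp

end ArithmeticFunction

open ArithmeticFunction

theorem stmt7_general (n : ℕ) :
    ArithmeticFunction.moebius n =
      ∑ k ∈ Finset.range (Nat.log 2 n + 1), (-1 : ℤ) ^ k * (f k n 2 : ℤ) := by
  set x : ArithmeticFunction ℤ := ζ - 1
  set N := Nat.log 2 n + 1
  have hgeom : ∑ k ∈ range N, (-x) ^ k = μ - μ * (-x) ^ N :=
    calc ∑ k ∈ range N, (-x) ^ k = μ * ((1 - -x) * ∑ k ∈ range N, (-x) ^ k) := by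
          rw [← mul_assoc, sub_neg_eq_add, add_sub_cancel, moebius_mul_coe_zeta, one_mul]
      _ = μ - μ * (-x) ^ N := by rw [mul_neg_geom_sum, mul_sub, mul_one]
  have htail : (μ * (-x) ^ N) n = 0 := by
    rw [mul_apply]
    refine sum_eq_zero fun p hp => ?_
    have hp2 : p.2 < 2 ^ N := (Nat.divisor_le (Nat.snd_mem_divisors_of_mem_antidiagonal hp)).trans_lt
      (Nat.lt_pow_succ_log_self one_lt_two n)
    rw [neg_pow_apply, zeta_sub_one_pow_apply, f_eq_zero_of_lt_pow hp2]
    simp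
  calc μ n = (μ - μ * (-x) ^ N) n := by rw [ArithmeticFunction.sub_apply, htail, sub_zero]
    _ = ∑ k ∈ range N, (-1) ^ k * (f k n 2 : ℤ) := by
      simp only [← hgeom, ArithmeticFunction.sum_apply, neg_pow_apply, x, zeta_sub_one_pow_apply]

theorem stmt7 (n : ℕ) (hn : 0 < n) :
    ArithmeticFunction.moebius n =
      ∑ k ∈ Finset.range (Nat.log 2 n + 1), (-1 : ℤ) ^ k * (f k n 2 : ℤ) :=
  stmt7_general n
end

section
/- For all positive integers n, k, l, f_k(n,l) = Σ_{i=0, l^i | n}^{k} C(k,i) · f_{k−i}(n/l^i, l+1), where the sum runs over those 0 ≤ i ≤ k for which l^i divides n. -/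
open Finset

/-!
Sort the `k`-tuples counted by `f k n l` according to the set `T` of positions whose entry is
exactly `l`. If `|T| = i`, the product of the entries on `T` is `l ^ i`, so such tuples exist only
when `l ^ i ∣ n`, and deleting the positions in `T` is a bijection onto the `(k - i)`-tuples with
entries `≥ l + 1` and product `n / l ^ i`. There are `C(k, i)` choices of `T`.
-/

theorem prod_eq_pow_card_mul_prod_compl {ι M : Type*} [Fintype ι] [DecidableEq ι] [CommMonoid M]
    (T : Finset ι) {v : ι → M} {a : M} (hT : ∀ i ∈ T, v i = a) :
    ∏ i, v i = a ^ #T * ∏ i : ↥Tᶜ, v i := by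
  rw [← prod_mul_prod_compl T v, prod_congr rfl hT, prod_const, prod_coe_sort]

def factorizations (ι : Type*) [Fintype ι] [DecidableEq ι] (n l : ℕ) : Finset (ι → ℕ) :=
  {v ∈ Fintype.piFinset fun _ : ι => Icc l n | ∏ i, v i = n}

theorem f_eq_card_factorizations (k n l : ℕ) : f k n l = #(factorizations (Fin k) n l) := rfl

section

variable {ι κ : Type*} [Fintype ι] [DecidableEq ι] [Fintype κ] [DecidableEq κ] {n l : ℕ}

theorem mem_factorizations (hn : 0 < n) {v : ι → ℕ} :
    v ∈ factorizations ι n l ↔ (∀ i, l ≤ v i) ∧ ∏ i, v i = n := by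
  simp only [factorizations, mem_filter, Fintype.mem_piFinset, mem_Icc]
  refine ⟨fun ⟨hv, hprod⟩ => ⟨fun i => (hv i).1, hprod⟩,
    fun ⟨hv, hprod⟩ => ⟨fun i => ?_, hprod⟩⟩
  exact ⟨hv i, Nat.le_of_dvd hn (hprod ▸ dvd_prod_of_mem v (mem_univ i))⟩

theorem card_factorizations_congr (e : ι ≃ κ) :
    #(factorizations ι n l) = #(factorizations κ n l) := by
  apply card_nbij' (fun v => v ∘ e.symm) (fun w => w ∘ e)
  · intro v hv
    simp only [factorizations, coe_filter, Set.mem_ofPred_eq, Fintype.mem_piFinset] at hv ⊢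
    exact ⟨fun i => hv.1 _, (e.symm.prod_comp v).trans hv.2⟩
  · intro w hw
    simp only [factorizations, coe_filter, Set.mem_ofPred_eq, Fintype.mem_piFinset] at hw ⊢
    exact ⟨fun i => hw.1 _, (e.prod_comp w).trans hw.2⟩
  · intro v _
    simp [Function.comp_def]
  · intro w _
    simp [Function.comp_def]

variable (T : Finset ι)

theorem pow_card_dvd_of_mem_filter_factorizations {v : ι → ℕ}
    (hv : v ∈ {v ∈ factorizations ι n l | ({i | v i = l} : Finset ι) = T}) :
    l ^ #T ∣ n := by
  simp only [factorizations, mem_filter] at hv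
  obtain ⟨⟨-, hprod⟩, rfl⟩ := hv
  rw [← hprod, prod_eq_pow_card_mul_prod_compl _ fun i hi => (mem_filter.1 hi).2]
  exact dvd_mul_right _ _

def extendConst {α : Type*} (a : α) (w : ↥Tᶜ → α) : ι → α :=
  fun i => if h : i ∈ T then a else w ⟨i, mem_compl.2 h⟩

theorem extendConst_of_mem {α : Type*} {a : α} {w : ↥Tᶜ → α} {i : ι} (hi : i ∈ T) :
    extendConst T a w i = a :=
  dif_pos hi

theorem extendConst_of_notMem {α : Type*} {a : α} {w : ↥Tᶜ → α} {i : ι} (hi : i ∉ T) :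
    extendConst T a w i = w ⟨i, mem_compl.2 hi⟩ :=
  dif_neg hi

theorem extendConst_mem_filter_factorizations (hn : 0 < n) {m : ℕ} (hm : n = l ^ #T * m)
    {w : ↥Tᶜ → ℕ} (hw : w ∈ factorizations (↥Tᶜ) m (l + 1)) :
    extendConst T l w ∈ {v ∈ factorizations ι n l | ({i | v i = l} : Finset ι) = T} := by
  rw [mem_factorizations (Nat.pos_of_mul_pos_left (hm ▸ hn))] at hw
  obtain ⟨hgt, hprod⟩ := hw
  simp only [mem_filter, mem_factorizations hn, Finset.ext_iff, mem_univ, true_and]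
  refine ⟨⟨fun i => ?_, ?_⟩, fun i => ?_⟩
  · by_cases hi : i ∈ T
    · exact (extendConst_of_mem T hi).ge
    · rw [extendConst_of_notMem T hi]
      exact Nat.le_of_succ_le (hgt _)
  · rw [prod_eq_pow_card_mul_prod_compl T fun i hi => extendConst_of_mem T hi, hm, ← hprod]
    exact congrArg _ (prod_congr rfl fun i _ => extendConst_of_notMem T (mem_compl.1 i.2))
  · by_cases hi : i ∈ T
    · simpa only [hi, iff_true] using extendConst_of_mem T hi
    · rw [extendConst_of_notMem T hi]
      simpa only [hi, iff_false] using (Nat.lt_of_succ_le (hgt _)).ne'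

theorem card_filter_factorizations_of_eq_mul (hn : 0 < n) {m : ℕ} (hm : n = l ^ #T * m) :
    #{v ∈ factorizations ι n l | ({i | v i = l} : Finset ι) = T} =
      #(factorizations (↥Tᶜ) m (l + 1)) := by
  have hlT : 0 < l ^ #T := Nat.pos_of_mul_pos_right (hm ▸ hn)
  have hm0 : 0 < m := Nat.pos_of_mul_pos_left (hm ▸ hn)
  apply card_nbij' (fun (v : ι → ℕ) (i : ↥Tᶜ) => v i) (extendConst T l)
  · intro v hv
    simp only [coe_filter, Set.mem_ofPred_eq, mem_factorizations hn, Finset.ext_iff, mem_filter,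
      mem_univ, true_and] at hv
    obtain ⟨⟨hge, hprod⟩, hT⟩ := hv
    rw [mem_coe, mem_factorizations hm0]
    refine ⟨fun i => lt_of_le_of_ne (hge i) fun h => mem_compl.1 i.2 ((hT i).1 h.symm), ?_⟩
    rw [prod_eq_pow_card_mul_prod_compl T fun i hi => (hT i).2 hi, hm] at hprod
    exact Nat.eq_of_mul_eq_mul_left hlT hprod
  · exact fun w hw => extendConst_mem_filter_factorizations T hn hm hw
  · intro v hv
    simp only [coe_filter, Set.mem_ofPred_eq, Finset.ext_iff, mem_filter, mem_univ, true_and] at hv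
    funext i
    by_cases hi : i ∈ T
    · exact (extendConst_of_mem T hi).trans ((hv.2 i).2 hi).symm
    · exact extendConst_of_notMem T hi
  · intro w _
    funext i
    exact extendConst_of_notMem T (mem_compl.1 i.2)

end

theorem card_filter_factorizations_fin {k n l i : ℕ} (hn : 0 < n) (T : Finset (Fin k))
    (hT : #T = i) :
    #{v ∈ factorizations (Fin k) n l | ({j | v j = l} : Finset (Fin k)) = T} =
      if l ^ i ∣ n then f (k - i) (n / l ^ i) (l + 1) else 0 := by
  subst hT
  split_ifs with hdvd
  · rw [card_filter_factorizations_of_eq_mul T hn (Nat.mul_div_cancel' hdvd).symm,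
      f_eq_card_factorizations]
    exact card_factorizations_congr <| Fintype.equivFinOfCardEq <| by
      rw [Fintype.card_coe, card_compl, Fintype.card_fin]
  · exact card_eq_zero.2 <| eq_empty_of_forall_notMem fun v hv =>
      hdvd (pow_card_dvd_of_mem_filter_factorizations T hv)

theorem stmt10_general (n k l : ℕ) (hn : 0 < n) :
    f k n l =
      ∑ i ∈ (Finset.range (k + 1)).filter (fun i => l ^ i ∣ n),
        Nat.choose k i * f (k - i) (n / l ^ i) (l + 1) := by
  rw [f_eq_card_factorizations, card_eq_sum_card_fiberwise
      (f := fun v => ({j | v j = l} : Finset (Fin k))) (t := univ.powerset)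
      fun _ _ => mem_powerset.2 (subset_univ _),
    sum_powerset, card_univ, Fintype.card_fin, sum_filter]
  refine sum_congr rfl fun i _ => ?_
  rw [sum_congr rfl fun T hT => card_filter_factorizations_fin hn T (mem_powersetCard_univ.1 hT),
    sum_const, card_powersetCard, card_univ, Fintype.card_fin, smul_eq_mul, mul_ite, mul_zero]

theorem stmt10 (n k l : ℕ) (hn : 0 < n) (hk : 0 < k) (hl : 0 < l) :
    f k n l =
      ∑ i ∈ (Finset.range (k + 1)).filter (fun i => l ^ i ∣ n),
        Nat.choose k i * f (k - i) (n / l ^ i) (l + 1) :=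
  stmt10_general n k l hn
end

section
/- For every real x ≥ 1 and all positive integers k, l, F_k(x,l) = Σ_{i=0}^{k} C(k,i) · F_{k−i}(x/l^i, l+1). -/
open Finset

/-! Summing `f k n l` over `n ≤ x` counts the `k`-tuples with entries `≥ l` and product at most
`N = ⌊x⌋`. Sort such a tuple by the set `S` of coordinates equal to `l`: for `#S = i` there are
`C(k, i)` choices of `S`, and the other `k - i` coordinates are `≥ l + 1` with product at most
`N / l ^ i`, where `⌊x / l ^ i⌋ = ⌊N / l ^ i⌋`. -/

def prodLeTuples (ι : Type*) [Fintype ι] [DecidableEq ι] (l N : ℕ) : Finset (ι → ℕ) :=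
  {v ∈ Fintype.piFinset fun _ : ι => Icc l N | ∏ j, v j ≤ N}

section

variable {ι : Type*} [Fintype ι] {l N : ℕ}

lemma apply_le_of_prod_le (hl : 0 < l) {M : ℕ} {v : ι → ℕ} (hv : ∀ j, l ≤ v j)
    (h : ∏ j, v j ≤ M) (j : ι) : v j ≤ M :=
  (single_le_prod' (fun i _ => hl.trans_le (hv i)) (mem_univ j)).trans h

variable [DecidableEq ι]

lemma mem_prodLeTuples (hl : 0 < l) {v : ι → ℕ} :
    v ∈ prodLeTuples ι l N ↔ (∀ j, l ≤ v j) ∧ ∏ j, v j ≤ N := by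
  simp only [prodLeTuples, mem_filter, Fintype.mem_piFinset, mem_Icc]
  exact ⟨fun h => ⟨fun j => (h.1 j).1, h.2⟩,
    fun h => ⟨fun j => ⟨h.1 j, apply_le_of_prod_le hl h.1 h.2 j⟩, h.2⟩⟩

lemma card_prodLeTuples_congr {κ : Type*} [Fintype κ] [DecidableEq κ] (e : ι ≃ κ) :
    #(prodLeTuples ι l N) = #(prodLeTuples κ l N) := by
  refine card_equiv (e.arrowCongr (Equiv.refl ℕ)) fun v => ?_
  simp only [prodLeTuples, mem_filter, Fintype.mem_piFinset, Equiv.arrowCongr_apply,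
    Equiv.coe_refl, Function.comp_apply, id_eq, Equiv.prod_comp e.symm v]
  exact and_congr_left' e.symm.forall_congr_right.symm

lemma prod_eq_pow_card_mul_prod_compl_s11 {S : Finset ι} {v : ι → ℕ} (hS : ∀ j ∈ S, v j = l) :
    ∏ j, v j = l ^ #S * ∏ j : {j // j ∉ S}, v j := by
  rw [← prod_mul_prod_compl S v, prod_congr rfl hS, prod_const,
    prod_subtype Sᶜ (fun _ => mem_compl)]

lemma card_prodLeTuples_filter_eq (hl : 0 < l) (S : Finset ι) :
    #{v ∈ prodLeTuples ι l N | ({j | v j = l} : Finset ι) = S} =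
      #(prodLeTuples {j // j ∉ S} (l + 1) (N / l ^ #S)) := by
  have hpow : 0 < l ^ #S := pow_pos hl _
  have hfiber : ∀ v : ι → ℕ, ({j | v j = l} : Finset ι) = S ↔ ∀ j, v j = l ↔ j ∈ S := by
    simp [Finset.ext_iff]
  refine card_bij' (fun v _ j => v j) (fun w _ j => if h : j ∈ S then l else w ⟨j, h⟩)
    ?_ ?_ ?_ ?_
  · intro v hv
    rw [mem_filter, mem_prodLeTuples hl, hfiber] at hv
    obtain ⟨⟨hge, hprod⟩, hS⟩ := hv
    rw [prod_eq_pow_card_mul_prod_compl_s11 fun j hj => (hS j).2 hj] at hprod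
    rw [mem_prodLeTuples (Nat.succ_pos l), Nat.le_div_iff_mul_le hpow, mul_comm]
    exact ⟨fun j => (hge j).lt_of_ne fun h => j.2 ((hS j).1 h.symm), hprod⟩
  · intro w hw
    rw [mem_prodLeTuples (Nat.succ_pos l), Nat.le_div_iff_mul_le hpow, mul_comm] at hw
    obtain ⟨hge, hprod⟩ := hw
    rw [mem_filter, mem_prodLeTuples hl, hfiber,
      prod_eq_pow_card_mul_prod_compl_s11 fun j hj => dif_pos hj]
    refine ⟨⟨fun j => ?_, ?_⟩, fun j => ?_⟩
    · split_ifs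
      exacts [le_rfl, (Nat.le_succ l).trans (hge _)]
    · rwa [prod_congr rfl fun j _ => dif_neg j.2]
    · split_ifs with h
      · exact iff_of_true rfl h
      · exact iff_of_false (Nat.ne_of_gt (hge _)) h
  · intro v hv
    rw [mem_filter, hfiber] at hv
    funext j
    split_ifs with h
    exacts [((hv.2 j).2 h).symm, rfl]
  · intro w _
    funext j
    exact dif_neg j.2

lemma card_prodLeTuples_eq_sum_choose (hl : 0 < l) :
    #(prodLeTuples ι l N) = ∑ i ∈ range (Fintype.card ι + 1),
      (Fintype.card ι).choose i *
        #(prodLeTuples (Fin (Fintype.card ι - i)) (l + 1) (N / l ^ i)) := by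
  rw [card_eq_sum_card_fiberwise (f := fun v => ({j | v j = l} : Finset ι))
      (t := univ.powerset) fun _ _ => mem_powerset.2 (subset_univ _),
    sum_powerset, card_univ]
  refine sum_congr rfl fun i _ => ?_
  have hfiber : ∀ S ∈ powersetCard i (univ : Finset ι),
      #{v ∈ prodLeTuples ι l N | ({j | v j = l} : Finset ι) = S} =
        #(prodLeTuples (Fin (Fintype.card ι - i)) (l + 1) (N / l ^ i)) := by
    intro S hS
    obtain ⟨-, rfl⟩ := mem_powersetCard.1 hS
    rw [card_prodLeTuples_filter_eq hl]
    exact card_prodLeTuples_congr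
      (Fintype.equivFinOfCardEq (by simp [Fintype.card_subtype_compl]))
  rw [sum_congr rfl hfiber, sum_const, card_powersetCard, card_univ, smul_eq_mul]

end

lemma F_eq_card_prodLeTuples {l : ℕ} (hl : 0 < l) (k : ℕ) (x : ℝ) :
    F k x l = #(prodLeTuples (Fin k) l ⌊x⌋₊) := by
  rw [card_eq_sum_card_fiberwise (f := fun v => ∏ j, v j) (t := Icc 1 ⌊x⌋₊)]
  · refine sum_congr rfl fun n hn => congrArg card (ext fun v => ?_)
    rw [mem_Icc] at hn
    simp only [mem_filter, mem_prodLeTuples hl, Fintype.mem_piFinset, mem_Icc]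
    constructor
    · rintro ⟨hv, rfl⟩
      exact ⟨⟨fun j => (hv j).1, hn.2⟩, rfl⟩
    · rintro ⟨⟨hge, -⟩, rfl⟩
      exact ⟨fun j => ⟨hge j, apply_le_of_prod_le hl hge le_rfl j⟩, rfl⟩
  · intro v hv
    rw [mem_coe, mem_prodLeTuples hl] at hv
    exact mem_Icc.2 ⟨one_le_prod' fun j _ => hl.trans_le (hv.1 j), hv.2⟩

theorem stmt11_general (x : ℝ) (k l : ℕ) (hl : 0 < l) :
    F k x l =
      ∑ i ∈ Finset.range (k + 1),
        Nat.choose k i * F (k - i) (x / (l : ℝ) ^ i) (l + 1) := by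
  rw [F_eq_card_prodLeTuples hl, card_prodLeTuples_eq_sum_choose hl, Fintype.card_fin]
  refine sum_congr rfl fun i _ => ?_
  rw [F_eq_card_prodLeTuples (Nat.succ_pos l), ← Nat.cast_pow, Nat.floor_div_natCast]

theorem stmt11 (x : ℝ) (hx : 1 ≤ x) (k l : ℕ) (hk : 0 < k) (hl : 0 < l) :
    F k x l =
      ∑ i ∈ Finset.range (k + 1),
        Nat.choose k i * F (k - i) (x / (l : ℝ) ^ i) (l + 1) :=
  stmt11_general x k l hl
end

section
/- For all positive integers n, l and every integer k ≥ 2, f_k(n,l) = Σ_{m=l}^{⌊n^{1/k}⌋} Σ_{i=1, m^i | n}^{k} C(k,i) · f_{k−i}(n/m^i, m+1), where the inner sum runs over those 1 ≤ i ≤ k for which m^i divides n. -/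
open Finset

/-!
Sort the ordered factorizations `v` of `n` by their least entry `m` and by the set `S` of
positions where `v` takes the value `m`. Since `m ^ k ≤ ∏ v = n`, the least entry lies in
`[l, ⌊n ^ (1 / k)⌋]`. Off `S`, `v` is an ordered factorization of `n / m ^ #S` into `k - #S`
factors `≥ m + 1`, and this restriction determines `v`; each size `i = #S` occurs for
`choose k i` sets `S`.
-/

lemma le_floor_rpow_one_div_of_pow_le {m n k : ℕ} (hk : k ≠ 0) (h : m ^ k ≤ n) :
    m ≤ ⌊(n : ℝ) ^ (1 / (k : ℝ))⌋₊ := by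
  rw [one_div]
  apply Nat.le_floor
  rw [Real.le_rpow_inv_iff_of_pos (by positivity) (by positivity) (by positivity),
    Real.rpow_natCast]
  exact_mod_cast h

lemma card_eq_sum_choose_mul {ι α : Type*} [Fintype α] [DecidableEq α] (s : Finset ι)
    (g : ι → Finset α) (I : Finset ℕ) (c : ℕ → ℕ) (hg : ∀ x ∈ s, #(g x) ∈ I)
    (hc : ∀ S : Finset α, #S ∈ I → #{x ∈ s | g x = S} = c #S) :
    #s = ∑ i ∈ I, (Fintype.card α).choose i * c i := by
  rw [card_eq_sum_card_fiberwise hg]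
  refine sum_congr rfl fun i hi => ?_
  have hgi : ∀ x ∈ {x ∈ s | #(g x) = i}, g x ∈ powersetCard i univ := fun x hx =>
    mem_powersetCard_univ.2 (mem_filter.1 hx).2
  rw [card_eq_sum_card_fiberwise hgi, ← card_univ, ← card_powersetCard, ← smul_eq_mul,
    ← sum_const]
  refine sum_congr rfl fun S hS => ?_
  rw [mem_powersetCard_univ] at hS
  subst hS
  rw [filter_filter, ← hc S hi]
  congr 1
  exact filter_congr fun x _ => ⟨And.right, fun h => ⟨h ▸ rfl, h⟩⟩

lemma inf'_eq_and_filter_eq_iff {α β : Type*} [Fintype α] [Nonempty α] [DecidableEq α]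
    [LinearOrder β] {S : Finset α} (hS : S.Nonempty) (v : α → β) (m : β) :
    (univ.inf' univ_nonempty v = m ∧ ({j | v j = m} : Finset α) = S) ↔
      ∀ j, (v j = m ↔ j ∈ S) ∧ m ≤ v j := by
  constructor
  · rintro ⟨rfl, rfl⟩ j
    exact ⟨by simp, inf'_le _ (mem_univ j)⟩
  · intro h
    obtain ⟨j, hj⟩ := hS
    have hinf : univ.inf' univ_nonempty v = m :=
      le_antisymm ((inf'_le _ (mem_univ j)).trans_eq ((h j).1.2 hj))
        (le_inf' _ _ fun j _ => (h j).2)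
    refine ⟨hinf, ?_⟩
    ext j
    simp [h j]

def orderedFactorizations (α : Type*) [Fintype α] [DecidableEq α] (n l : ℕ) :
    Finset (α → ℕ) :=
  (Fintype.piFinset fun _ : α => Icc l n).filter fun v => ∏ i, v i = n

section OrderedFactorizations

variable {α β : Type*} [Fintype α] [DecidableEq α] [Fintype β] [DecidableEq β] {n l : ℕ}

lemma mem_orderedFactorizations {v : α → ℕ} :
    v ∈ orderedFactorizations α n l ↔ (∀ i, l ≤ v i ∧ v i ≤ n) ∧ ∏ i, v i = n := by
  simp [orderedFactorizations]

lemma card_orderedFactorizations_congr (e : α ≃ β) :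
    #(orderedFactorizations α n l) = #(orderedFactorizations β n l) := by
  refine card_nbij' (fun v => v ∘ e.symm) (fun w => w ∘ e) ?_ ?_ ?_ ?_
  · intro v hv
    rw [mem_coe, mem_orderedFactorizations] at hv ⊢
    exact ⟨fun _ => hv.1 _, (e.symm.prod_comp v).trans hv.2⟩
  · intro w hw
    rw [mem_coe, mem_orderedFactorizations] at hw ⊢
    exact ⟨fun _ => hw.1 _, (e.prod_comp w).trans hw.2⟩
  · intro v _; ext; simp
  · intro w _; ext; simp

lemma card_orderedFactorizations :
    #(orderedFactorizations α n l) = f (Fintype.card α) n l :=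
  card_orderedFactorizations_congr (Fintype.equivFin α)

lemma inf'_mem_Icc_of_mem_orderedFactorizations [Nonempty α] {v : α → ℕ}
    (hv : v ∈ orderedFactorizations α n l) :
    univ.inf' univ_nonempty v ∈ Icc l ⌊(n : ℝ) ^ (1 / (Fintype.card α : ℝ))⌋₊ := by
  rw [mem_orderedFactorizations] at hv
  refine mem_Icc.2 ⟨le_inf' _ _ fun j _ => (hv.1 j).1,
    le_floor_rpow_one_div_of_pow_le Fintype.card_ne_zero ?_⟩
  calc univ.inf' univ_nonempty v ^ Fintype.card α
      = univ.inf' univ_nonempty v ^ #(univ : Finset α) := by rw [card_univ]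
    _ ≤ ∏ j, v j := pow_card_le_prod _ _ _ fun j _ => inf'_le _ (mem_univ j)
    _ = n := hv.2

lemma card_filter_orderedFactorizations_eq_iff_mem (S : Finset α) {m : ℕ} (hn : 0 < n)
    (hlm : l ≤ m) (hS : m ^ #S ∣ n) :
    #{v ∈ orderedFactorizations α n l | ∀ j, (v j = m ↔ j ∈ S) ∧ m ≤ v j} =
      #(orderedFactorizations (Sᶜ : Finset α) (n / m ^ #S) (m + 1)) := by
  have hpos : 0 < m ^ #S := Nat.pos_of_dvd_of_pos hS hn
  refine card_nbij' (fun v j => v j)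
    (fun w a => if h : a ∈ S then m else w ⟨a, mem_compl.2 h⟩) ?_ ?_ ?_ ?_
  · intro v hv
    rw [mem_coe, mem_filter, mem_orderedFactorizations] at hv
    obtain ⟨⟨-, hvp⟩, hvS⟩ := hv
    have hprod : ∏ j ∈ Sᶜ, v j = n / m ^ #S := by
      rw [← prod_compl_mul_prod S v, prod_eq_pow_card fun j hj => (hvS j).1.2 hj] at hvp
      exact Nat.eq_div_of_mul_eq_left hpos.ne' hvp
    rw [mem_coe, mem_orderedFactorizations, prod_coe_sort Sᶜ v, hprod]
    refine ⟨fun j => ⟨?_, ?_⟩, rfl⟩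
    · exact (hvS j).2.lt_of_ne fun h => mem_compl.1 j.2 ((hvS j).1.1 h.symm)
    · exact Nat.le_of_dvd (Nat.div_pos (Nat.le_of_dvd hn hS) hpos)
        (hprod ▸ dvd_prod_of_mem v j.2)
  · intro w hw
    rw [mem_coe, mem_orderedFactorizations] at hw
    obtain ⟨hwb, hwp⟩ := hw
    dsimp only
    set v : α → ℕ := fun a => if h : a ∈ S then m else w ⟨a, mem_compl.2 h⟩
    have hvS : ∀ a ∈ S, v a = m := fun a ha => dif_pos ha
    have hvSc : ∀ a (ha : a ∉ S), v a = w ⟨a, mem_compl.2 ha⟩ := fun a ha => dif_neg ha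
    have hmn : ∀ a ∈ S, m ≤ n := fun a ha =>
      (Nat.le_self_pow (card_ne_zero_of_mem ha) m).trans (Nat.le_of_dvd hn hS)
    rw [mem_coe, mem_filter, mem_orderedFactorizations]
    refine ⟨⟨fun a => ?_, ?_⟩, fun a => ?_⟩
    · by_cases ha : a ∈ S
      · rw [hvS a ha]; exact ⟨hlm, hmn a ha⟩
      · rw [hvSc a ha]
        exact ⟨(hlm.trans m.le_succ).trans (hwb _).1,
          (hwb _).2.trans (Nat.div_le_self _ _)⟩
    · rw [← prod_compl_mul_prod S v, prod_eq_pow_card hvS, ← prod_coe_sort Sᶜ v,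
        ← Nat.div_mul_cancel hS, ← hwp]
      congr 1
      exact prod_congr rfl fun j _ => hvSc j (mem_compl.1 j.2)
    · by_cases ha : a ∈ S
      · rw [hvS a ha]; exact ⟨iff_of_true rfl ha, le_rfl⟩
      · rw [hvSc a ha]
        exact ⟨iff_of_false (Nat.lt_of_succ_le (hwb _).1).ne' ha,
          m.le_succ.trans (hwb _).1⟩
  · intro v hv
    rw [mem_coe, mem_filter] at hv
    funext a
    dsimp only
    split_ifs with h
    · exact ((hv.2 a).1.2 h).symm
    · rfl
  · intro w _
    funext j
    simp [mem_compl.1 j.2]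

lemma card_filter_inf'_eq [Nonempty α] {m : ℕ} (hn : 0 < n) (hlm : l ≤ m) :
    #{v ∈ orderedFactorizations α n l | univ.inf' univ_nonempty v = m} =
      ∑ i ∈ (Icc 1 (Fintype.card α)).filter (fun i => m ^ i ∣ n),
        (Fintype.card α).choose i * f (Fintype.card α - i) (n / m ^ i) (m + 1) := by
  refine card_eq_sum_choose_mul _ (fun v => ({j | v j = m} : Finset α)) _
    (fun i => f (Fintype.card α - i) (n / m ^ i) (m + 1)) ?_ ?_
  · intro v hv
    rw [mem_filter, mem_orderedFactorizations] at hv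
    obtain ⟨⟨-, hvp⟩, rfl⟩ := hv
    obtain ⟨j, -, hj⟩ := exists_mem_eq_inf' univ_nonempty v
    refine mem_filter.2 ⟨mem_Icc.2 ⟨card_pos.2 ⟨j, by simp [hj]⟩, card_le_univ _⟩, ?_⟩
    rw [← prod_eq_pow_card fun j hj => (mem_filter.1 hj).2, ← hvp]
    exact prod_dvd_prod_of_subset _ _ _ (subset_univ _)
  · intro S hS
    obtain ⟨⟨hS1, -⟩, hdvd⟩ := by simpa only [mem_filter, mem_Icc] using hS
    rw [filter_filter, filter_congr fun v _ => inf'_eq_and_filter_eq_iff (card_pos.1 hS1) v m,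
      card_filter_orderedFactorizations_eq_iff_mem S hn hlm hdvd, card_orderedFactorizations,
      Fintype.card_coe, card_compl]

end OrderedFactorizations

theorem stmt12_general (n l k : ℕ) (hn : 0 < n) (hk : 2 ≤ k) :
    f k n l =
      ∑ m ∈ Finset.Icc l ⌊(n : ℝ) ^ (1 / (k : ℝ))⌋₊,
        ∑ i ∈ (Finset.Icc 1 k).filter (fun i => m ^ i ∣ n),
          Nat.choose k i * f (k - i) (n / m ^ i) (m + 1) := by
  have : NeZero k := ⟨by omega⟩
  have hinf : ∀ v ∈ orderedFactorizations (Fin k) n l,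
      univ.inf' univ_nonempty v ∈ Icc l ⌊(n : ℝ) ^ (1 / (k : ℝ))⌋₊ := fun v hv => by
    simpa using inf'_mem_Icc_of_mem_orderedFactorizations hv
  calc f k n l = #(orderedFactorizations (Fin k) n l) := rfl
    _ = _ := card_eq_sum_card_fiberwise hinf
    _ = _ := sum_congr rfl fun m hm => by
      simpa using card_filter_inf'_eq (α := Fin k) hn (mem_Icc.1 hm).1

theorem stmt12 (n l k : ℕ) (hn : 0 < n) (hl : 0 < l) (hk : 2 ≤ k) :
    f k n l =
      ∑ m ∈ Finset.Icc l ⌊(n : ℝ) ^ (1 / (k : ℝ))⌋₊,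
        ∑ i ∈ (Finset.Icc 1 k).filter (fun i => m ^ i ∣ n),
          Nat.choose k i * f (k - i) (n / m ^ i) (m + 1) :=
  stmt12_general n l k hn hk
end

section
/- For every real x ≥ 1 and every integer k ≥ 0, D_k(x) = Σ_{i=0}^{⌊log₂ x⌋} C(k,i) F_i(x), where D_k(x) = F_k(x,1) and F_i(x) = F_i(x,2). -/
open Finset

/-!
Sort a factorisation `n = i₁ ⋯ i_k` into factors `≥ 1` by the set `S` of positions carrying a
factor `≥ 2`: the other factors are `1`, and restricting to `S` is a bijection onto the
factorisations of `n` into `#S` factors `≥ 2`. Hence `f_k(n,1) = ∑_S f_{#S}(n,2) =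
∑_i C(k,i) f_i(n,2)`, and summing over `n ≤ x` gives `D_k(x) = ∑_{i ≤ k} C(k,i) F_i(x)`.
The range of summation may be changed to `i ≤ ⌊log₂ x⌋`: a product of `i` factors `≥ 2` is at
least `2^i`, so `F_i(x) = 0` once `2^i > x`, and `C(k,i) = 0` once `i > k`.
-/

def mulTuples (ι : Type*) [Fintype ι] [DecidableEq ι] (n l : ℕ) : Finset (ι → ℕ) :=
  (Fintype.piFinset fun _ : ι => Icc l n).filter fun v => ∏ i, v i = n

section MulTuples

variable {ι κ : Type*} [Fintype ι] [DecidableEq ι] [Fintype κ] [DecidableEq κ]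

lemma mem_mulTuples {n l : ℕ} {v : ι → ℕ} :
    v ∈ mulTuples ι n l ↔ (∀ i, v i ∈ Icc l n) ∧ ∏ i, v i = n := by
  simp only [mulTuples, mem_filter, Fintype.mem_piFinset]

lemma f_eq_card_mulTuples (k n l : ℕ) : f k n l = #(mulTuples (Fin k) n l) := rfl

lemma card_mulTuples_congr (e : ι ≃ κ) (n l : ℕ) :
    #(mulTuples ι n l) = #(mulTuples κ n l) := by
  refine card_equiv (e.arrowCongr (Equiv.refl ℕ)) fun v => ?_
  simp only [mem_mulTuples, Equiv.arrowCongr_apply, Equiv.coe_refl, Function.comp_apply, id_eq,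
    e.symm.forall_congr_right (q := fun i => v i ∈ Icc l n), e.symm.prod_comp]

lemma mem_filter_mulTuples_one_iff {n : ℕ} (hn : 1 ≤ n) (S : Finset ι) (v : ι → ℕ) :
    v ∈ {v ∈ mulTuples ι n 1 | ({j | 2 ≤ v j} : Finset ι) = S} ↔
      (∀ j ∈ S, v j ∈ Icc 2 n) ∧ (∀ j ∉ S, v j = 1) ∧ ∏ j ∈ S, v j = n := by
  simp only [mem_filter, mem_mulTuples, Finset.ext_iff, mem_univ, true_and, mem_Icc]
  constructor
  · rintro ⟨⟨hv, hprod⟩, hS⟩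
    have hS1 (j) (hj : j ∉ S) : v j = 1 := by
      have := hv j
      have := (hS j).not.mpr hj
      omega
    refine ⟨fun j hj => ⟨(hS j).mpr hj, (hv j).2⟩, hS1, ?_⟩
    rwa [prod_subset (subset_univ S) fun j _ hj => hS1 j hj]
  · rintro ⟨hS2, hS1, hprod⟩
    have hv (j) : 1 ≤ v j ∧ v j ≤ n := by
      by_cases hj : j ∈ S
      · have := hS2 j hj; omega
      · rw [hS1 j hj]; exact ⟨le_rfl, hn⟩
    refine ⟨⟨hv, ?_⟩, fun j => ⟨fun h => ?_, fun hj => (hS2 j hj).1⟩⟩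
    · rwa [← prod_subset (subset_univ S) fun j _ hj => hS1 j hj]
    · by_contra hj; rw [hS1 j hj] at h; omega

lemma card_filter_mulTuples_one {n : ℕ} (hn : 1 ≤ n) (S : Finset ι) :
    #{v ∈ mulTuples ι n 1 | ({j | 2 ≤ v j} : Finset ι) = S} = #(mulTuples S n 2) := by
  refine card_nbij' (fun v s => v s) (fun w j => if h : j ∈ S then w ⟨j, h⟩ else 1)
    ?_ ?_ ?_ ?_
  · intro v hv
    obtain ⟨hS2, -, hprod⟩ := (mem_filter_mulTuples_one_iff hn S v).mp hv
    exact mem_mulTuples.mpr ⟨fun s => hS2 s s.2, by rwa [prod_coe_sort S v]⟩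
  · intro w hw
    obtain ⟨hw2, hprod⟩ := mem_mulTuples.mp hw
    refine (mem_filter_mulTuples_one_iff hn S _).mpr ⟨fun j hj => ?_, fun j hj => ?_, ?_⟩
    · simpa [hj] using hw2 ⟨j, hj⟩
    · simp [hj]
    · rw [← prod_coe_sort]
      simpa using hprod
  · intro v hv
    obtain ⟨-, hS1, -⟩ := (mem_filter_mulTuples_one_iff hn S v).mp hv
    funext j
    by_cases hj : j ∈ S <;> simp [hj, hS1]
  · intro w _
    funext s
    simp

lemma card_mulTuples_one {n : ℕ} (hn : 1 ≤ n) :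
    #(mulTuples ι n 1) = ∑ S : Finset ι, #(mulTuples S n 2) := by
  rw [card_eq_sum_card_fiberwise (f := fun v : ι → ℕ => ({j | 2 ≤ v j} : Finset ι))
    fun _ _ => mem_univ _]
  exact sum_congr rfl fun S _ => card_filter_mulTuples_one hn S

end MulTuples

lemma f_one_eq_sum_choose_mul {n : ℕ} (hn : 1 ≤ n) (k : ℕ) :
    f k n 1 = ∑ i ∈ range (k + 1), k.choose i * f i n 2 := by
  have hS (S : Finset (Fin k)) : #(mulTuples S n 2) = f #S n 2 := by
    rw [f_eq_card_mulTuples, card_mulTuples_congr S.equivFin]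
  rw [f_eq_card_mulTuples, card_mulTuples_one hn]
  simp_rw [hS, ← powerset_univ, sum_powerset_apply_card (fun i => f i n 2), card_univ,
    Fintype.card_fin, smul_eq_mul]

lemma f_two_eq_zero_of_lt_two_pow {i n : ℕ} (h : n < 2 ^ i) : f i n 2 = 0 := by
  refine card_eq_zero.mpr <| filter_eq_empty_iff.mpr fun v hv hprod => h.not_ge ?_
  rw [Fintype.mem_piFinset] at hv
  calc 2 ^ i = ∏ _j : Fin i, 2 := by simp
    _ ≤ ∏ j, v j := prod_le_prod' fun j _ => (mem_Icc.mp (hv j)).1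
    _ = n := hprod

lemma F_two_eq_zero_of_lt_two_pow {i : ℕ} {x : ℝ} (h : x < 2 ^ i) : F i x 2 = 0 := by
  refine sum_eq_zero fun n hn => f_two_eq_zero_of_lt_two_pow ?_
  obtain ⟨hn1, hnx⟩ := mem_Icc.mp hn
  exact_mod_cast ((Nat.le_floor_iff' (by omega)).mp hnx).trans_lt h

lemma F_one_eq_sum_choose_mul (k : ℕ) (x : ℝ) :
    F k x 1 = ∑ i ∈ range (k + 1), k.choose i * F i x 2 := by
  simp only [F, mul_sum]
  rw [sum_comm]
  exact sum_congr rfl fun n hn => f_one_eq_sum_choose_mul (mem_Icc.mp hn).1 k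

lemma lt_two_pow_floor_logb_add_one {x : ℝ} (hx : 0 < x) : x < 2 ^ (⌊Real.logb 2 x⌋₊ + 1) := by
  rw [← Real.rpow_natCast, ← Real.logb_lt_iff_lt_rpow one_lt_two hx]
  push_cast
  exact Nat.lt_floor_add_one _

theorem stmt14 (x : ℝ) (hx : 1 ≤ x) (k : ℕ) :
    F k x 1 =
      ∑ i ∈ Finset.range (⌊Real.logb 2 x⌋₊ + 1), Nat.choose k i * F i x 2 := by
  set L := ⌊Real.logb 2 x⌋₊
  calc F k x 1 = ∑ i ∈ range (k + 1), k.choose i * F i x 2 := F_one_eq_sum_choose_mul k x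
    _ = ∑ i ∈ range (k + L + 1), k.choose i * F i x 2 := by
      refine sum_subset (range_subset_range.mpr (by omega)) fun i _ hi => ?_
      rw [Nat.choose_eq_zero_of_lt (by simpa using hi), zero_mul]
    _ = ∑ i ∈ range (L + 1), k.choose i * F i x 2 := by
      refine (sum_subset (range_subset_range.mpr (by omega)) fun i _ hi => ?_).symm
      have hi : L + 1 ≤ i := by simpa using hi
      rw [F_two_eq_zero_of_lt_two_pow ((lt_two_pow_floor_logb_add_one (by positivity)).trans_le
        (pow_le_pow_right₀ one_le_two hi)), mul_zero]
end

section
/- For every real x ≥ 1 and all positive integers k, l, F_k(x,l) = Σ_{i=0}^{τ(x,k,l)} C(k,i) F_i(x/l^{k−i}, l+1), where τ(x,k,l) = min(k, ⌈(log x − k log l)/(log(l+1) − log l)⌉); in particular every term of the sum Σ_{i=0}^{k} C(k,i) F_i(x/l^{k−i}, l+1) with index i > τ(x,k,l) vanishes. -/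
open Finset

/-! Sort the `k`-tuples with entries `≥ l` and product `n` by the set `S` of coordinates whose
entry exceeds `l`. Every other coordinate equals `l`, so if `#S = i` the tuples with this `S` are
the `i`-tuples with entries `≥ l + 1` and product `n / l ^ (k - i)` (none unless `l ^ (k - i) ∣ n`).
Summing over `n ≤ x` turns the count into `F i (x / l ^ (k - i)) (l + 1)`, and since such an
`i`-tuple has product at least `(l + 1) ^ i`, the term vanishes once
`l ^ (k - i) (l + 1) ^ i > x`, which is what `i > τ` says after taking logarithms. -/

open Function

lemma prod_extend_const {α β M : Type*} [Fintype α] [Fintype β] [DecidableEq β]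
    [CommMonoid M] (ι : α ↪ β) (w : α → M) (c : M) :
    ∏ b, extend ι w (fun _ => c) b = (∏ a, w a) * c ^ (Fintype.card β - Fintype.card α) := by
  rw [← prod_mul_prod_compl (univ.map ι), prod_map]
  congr 1
  · exact prod_congr rfl fun a _ => ι.injective.extend_apply _ _ a
  · rw [prod_congr rfl fun b hb => extend_apply' _ _ b ?_, prod_const, card_compl, card_map,
      card_univ]
    · simpa using hb

lemma extend_comp_self_of_eqOn_compl {α β γ : Type*} (ι : α ↪ β) {v : β → γ} {c : γ}
    (hv : ∀ b ∉ Set.range ι, v b = c) : extend ι (v ∘ ι) (fun _ => c) = v := by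
  funext b
  by_cases hb : b ∈ Set.range ι
  · obtain ⟨a, rfl⟩ := hb
    exact ι.injective.extend_apply _ _ a
  · rw [extend_apply' _ _ b hb, hv b hb]

def factorTuples (k n l : ℕ) : Finset (Fin k → ℕ) :=
  (Fintype.piFinset fun _ : Fin k => Icc l n).filter fun v => ∏ j, v j = n

section FactorTuples

variable {i k n l : ℕ}

lemma f_eq_card_factorTuples : f k n l = #(factorTuples k n l) := rfl

lemma mem_factorTuples {v : Fin k → ℕ} (hl : 0 < l) :
    v ∈ factorTuples k n l ↔ (∀ j, l ≤ v j) ∧ ∏ j, v j = n := by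
  simp only [factorTuples, mem_filter, Fintype.mem_piFinset, mem_Icc]
  refine ⟨fun h => ⟨fun j => (h.1 j).1, h.2⟩, fun ⟨hlv, hprod⟩ => ⟨fun j => ⟨hlv j, ?_⟩, hprod⟩⟩
  have hpos : 0 < ∏ j, v j := prod_pos fun j _ => hl.trans_le (hlv j)
  exact hprod ▸ Nat.le_of_dvd hpos (dvd_prod_of_mem v (mem_univ j))

lemma mem_fiber_factorTuples_spec (hl : 0 < l) (ι : Fin i ↪ Fin k) {v : Fin k → ℕ}
    (hv : v ∈ factorTuples k n l) (hS : univ.filter (fun j => l < v j) = univ.map ι) :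
    (∀ t, l + 1 ≤ v (ι t)) ∧ extend ι (v ∘ ι) (fun _ => l) = v ∧
      (∏ t, v (ι t)) * l ^ (k - i) = n := by
  have hbig : ∀ j, l < v j ↔ j ∈ Set.range ι := fun j => by
    simpa using congrArg (j ∈ ·) hS
  obtain ⟨hlv, hprod⟩ := (mem_factorTuples hl).1 hv
  have hext : extend ι (v ∘ ι) (fun _ => l) = v :=
    extend_comp_self_of_eqOn_compl ι fun j hj =>
      le_antisymm (not_lt.1 fun h => hj ((hbig j).1 h)) (hlv j)
  refine ⟨fun t => (hbig _).2 ⟨t, rfl⟩, hext, ?_⟩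
  simpa [hext, hprod] using (prod_extend_const ι (v ∘ ι) l).symm

lemma extend_mem_fiber_factorTuples {m : ℕ} (hl : 0 < l) (ι : Fin i ↪ Fin k) {w : Fin i → ℕ}
    (hw : w ∈ factorTuples i m (l + 1)) (hm : m * l ^ (k - i) = n) :
    extend ι w (fun _ => l) ∈
      {v ∈ factorTuples k n l | univ.filter (fun j => l < v j) = univ.map ι} := by
  obtain ⟨hlw, hprod⟩ := (mem_factorTuples (Nat.succ_pos l)).1 hw
  have hvalue : ∀ j, (∃ t, ι t = j ∧ extend ι w (fun _ => l) j = w t) ∨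
      (j ∉ Set.range ι ∧ extend ι w (fun _ => l) j = l) := fun j => by
    by_cases hj : j ∈ Set.range ι
    · obtain ⟨t, rfl⟩ := hj
      exact .inl ⟨t, rfl, ι.injective.extend_apply w _ t⟩
    · exact .inr ⟨hj, extend_apply' w _ j hj⟩
  refine mem_filter.2 ⟨(mem_factorTuples hl).2 ⟨fun j => ?_, ?_⟩, ?_⟩
  · rcases hvalue j with ⟨t, -, h⟩ | ⟨-, h⟩
    · exact h ▸ (Nat.le_succ l).trans (hlw t)
    · exact h.ge
  · rw [prod_extend_const, Fintype.card_fin, Fintype.card_fin, hprod, hm]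
  · ext j
    simp only [mem_filter, mem_univ, true_and, mem_map]
    rcases hvalue j with ⟨t, rfl, h⟩ | ⟨hj, h⟩
    · simpa [h] using hlw t
    · simpa [h] using hj

lemma card_fiber_factorTuples (hl : 0 < l) (ι : Fin i ↪ Fin k) :
    #{v ∈ factorTuples k n l | univ.filter (fun j => l < v j) = univ.map ι} =
      if l ^ (k - i) ∣ n then f i (n / l ^ (k - i)) (l + 1) else 0 := by
  split_ifs with hdvd
  · rw [f_eq_card_factorTuples]
    refine card_nbij' (· ∘ ι) (extend ι · (fun _ => l)) ?_ ?_ ?_ ?_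
    · intro v hv
      obtain ⟨hv, hS⟩ := mem_filter.1 hv
      obtain ⟨hbig, -, hprod⟩ := mem_fiber_factorTuples_spec hl ι hv hS
      refine (mem_factorTuples (Nat.succ_pos l)).2 ⟨hbig, ?_⟩
      exact (Nat.div_eq_of_eq_mul_left (pow_pos hl _) hprod.symm).symm
    · exact fun w hw => extend_mem_fiber_factorTuples hl ι hw (Nat.div_mul_cancel hdvd)
    · intro v hv
      obtain ⟨hv, hS⟩ := mem_filter.1 hv
      exact (mem_fiber_factorTuples_spec hl ι hv hS).2.1
    · exact fun w _ => funext (ι.injective.extend_apply w (fun _ => l))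
  · refine card_eq_zero.2 (filter_eq_empty_iff.2 fun v hv hS => hdvd ?_)
    exact Dvd.intro_left _ (mem_fiber_factorTuples_spec hl ι hv hS).2.2

lemma f_eq_sum_choose_mul (hl : 0 < l) :
    f k n l = ∑ i ∈ range (k + 1),
      k.choose i * if l ^ (k - i) ∣ n then f i (n / l ^ (k - i)) (l + 1) else 0 := by
  rw [f_eq_card_factorTuples, card_eq_sum_card_fiberwise (t := univ.powerset)
    fun v _ => mem_powerset.2 (subset_univ (univ.filter fun j => l < v j)),
    sum_powerset, card_univ, Fintype.card_fin]
  refine sum_congr rfl fun i _ => ?_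
  rw [sum_congr rfl fun S hS => ?_, sum_const, card_powersetCard, card_univ, Fintype.card_fin,
    smul_eq_mul]
  have hS := (mem_powersetCard.1 hS).2
  rw [← map_orderEmbOfFin_univ S hS, card_fiber_factorTuples hl]

end FactorTuples

lemma sum_Icc_ite_dvd {M : Type*} [AddCommMonoid M] (g : ℕ → M) {d : ℕ} (hd : 0 < d)
    (N : ℕ) :
    ∑ n ∈ Icc 1 N, (if d ∣ n then g (n / d) else 0) = ∑ m ∈ Icc 1 (N / d), g m := by
  rw [← sum_filter]
  refine sum_nbij' (· / d) (· * d) (fun n hn => ?_) (fun m hm => ?_)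
    (fun n hn => Nat.div_mul_cancel (mem_filter.1 hn).2) (fun m _ => Nat.mul_div_cancel m hd)
    fun _ _ => rfl
  · obtain ⟨hn, hdn⟩ := mem_filter.1 hn
    obtain ⟨hn1, hnN⟩ := mem_Icc.1 hn
    exact mem_Icc.2 ⟨(Nat.one_le_div_iff hd).2 (Nat.le_of_dvd hn1 hdn), Nat.div_le_div_right hnN⟩
  · obtain ⟨hm1, hmN⟩ := mem_Icc.1 hm
    exact mem_filter.2 ⟨mem_Icc.2 ⟨Nat.one_le_iff_ne_zero.2 (by positivity),
      (Nat.le_div_iff_mul_le hd).1 hmN⟩, dvd_mul_left d m⟩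

theorem F_eq_sum_choose_mul (k : ℕ) (x : ℝ) {l : ℕ} (hl : 0 < l) :
    F k x l = ∑ i ∈ range (k + 1), k.choose i * F i (x / (l : ℝ) ^ (k - i)) (l + 1) := by
  calc F k x l
      = ∑ i ∈ range (k + 1), k.choose i * ∑ n ∈ Icc 1 ⌊x⌋₊,
          (if l ^ (k - i) ∣ n then f i (n / l ^ (k - i)) (l + 1) else 0) := by
        simp only [F, f_eq_sum_choose_mul hl, mul_sum]
        exact sum_comm
    _ = _ := by
        refine sum_congr rfl fun i _ => ?_
        rw [sum_Icc_ite_dvd (f i · (l + 1)) (pow_pos hl _), F, ← Nat.cast_pow, Nat.floor_div_natCast]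

lemma F_eq_zero_of_lt_pow {i l : ℕ} {y : ℝ} (hy : y < (l : ℝ) ^ i) : F i y l = 0 := by
  refine sum_eq_zero fun n hn => card_eq_zero.2 (filter_eq_empty_iff.2 fun v hv hprod => ?_)
  obtain ⟨hn1, hny⟩ := mem_Icc.1 hn
  have hle : l ^ i ≤ n := by
    calc l ^ i = ∏ _t : Fin i, l := by simp
      _ ≤ ∏ t, v t := prod_le_prod' fun t _ => (mem_Icc.1 (Fintype.mem_piFinset.1 hv t)).1
      _ = n := hprod
  have hln : (l : ℝ) ^ i ≤ n := by exact_mod_cast hle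
  linarith [(Nat.le_floor_iff' (by omega : n ≠ 0)).1 hny]

open Real in
lemma lt_pow_mul_pow_of_ceil_lt {a x : ℝ} (ha : 0 < a) (hx : 0 < x) {i k : ℕ} (hik : i ≤ k)
    (h : ⌈(log x - k * log a) / (log (a + 1) - log a)⌉ < i) :
    x < a ^ (k - i) * (a + 1) ^ i := by
  have hgap : 0 < log (a + 1) - log a := sub_pos.2 (log_lt_log ha (lt_add_one a))
  have hlt : (log x - k * log a) / (log (a + 1) - log a) < i :=
    (Int.le_ceil _).trans_lt (by exact_mod_cast h)
  rw [div_lt_iff₀ hgap] at hlt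
  rw [← log_lt_log_iff hx (by positivity), log_mul (by positivity) (by positivity), log_pow,
    log_pow, Nat.cast_sub hik]
  linarith

theorem stmt18_general (x : ℝ) (hx : 1 ≤ x) (k l : ℕ) (hl : 0 < l) :
    F k x l =
      ∑ i ∈ (Finset.range (k + 1)).filter (fun i : ℕ =>
          (i : ℤ) ≤ min (k : ℤ)
            ⌈(Real.log x - k * Real.log l) / (Real.log ((l : ℝ) + 1) - Real.log l)⌉),
        Nat.choose k i * F i (x / (l : ℝ) ^ (k - i)) (l + 1) ∧
    ∀ i ≤ k,
      min (k : ℤ)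
          ⌈(Real.log x - k * Real.log l) / (Real.log ((l : ℝ) + 1) - Real.log l)⌉
        < (i : ℤ) →
      F i (x / (l : ℝ) ^ (k - i)) (l + 1) = 0 := by
  set τ : ℤ := min (k : ℤ)
    ⌈(Real.log x - k * Real.log l) / (Real.log ((l : ℝ) + 1) - Real.log l)⌉
  have vanish : ∀ i ≤ k, τ < i → F i (x / (l : ℝ) ^ (k - i)) (l + 1) = 0 := by
    intro i hik hmin
    have hceil := (min_lt_iff.1 hmin).resolve_left (by omega)
    refine F_eq_zero_of_lt_pow ?_
    rw [div_lt_iff₀ (by positivity), mul_comm, Nat.cast_add_one]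
    exact lt_pow_mul_pow_of_ceil_lt (Nat.cast_pos.2 hl) (by linarith) hik hceil
  refine ⟨?_, vanish⟩
  rw [F_eq_sum_choose_mul k x hl, sum_filter]
  refine sum_congr rfl fun i hi => ?_
  split_ifs with hi'
  · rfl
  · rw [vanish i (Nat.lt_succ_iff.1 (mem_range.1 hi)) (not_le.1 hi'), mul_zero]

theorem stmt18 (x : ℝ) (hx : 1 ≤ x) (k l : ℕ) (hk : 0 < k) (hl : 0 < l) :
    F k x l =
      ∑ i ∈ (Finset.range (k + 1)).filter (fun i : ℕ =>
          (i : ℤ) ≤ min (k : ℤ)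
            ⌈(Real.log x - k * Real.log l) / (Real.log ((l : ℝ) + 1) - Real.log l)⌉),
        Nat.choose k i * F i (x / (l : ℝ) ^ (k - i)) (l + 1) ∧
    ∀ i ≤ k,
      min (k : ℤ)
          ⌈(Real.log x - k * Real.log l) / (Real.log ((l : ℝ) + 1) - Real.log l)⌉
        < (i : ℤ) →
      F i (x / (l : ℝ) ^ (k - i)) (l + 1) = 0 :=
  stmt18_general x hx k l hl
end
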